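/- Generalized Crooks fluctuation theorem: if X = (X_n)_{n=0}^N is a Markov chain on finite S with positive initial distribution p_0, irreducible transition matrices (M_n), and p_0 equal to the stationary distribution p_1 of M_1, then there exist a Markov chain Y and a constant k ∈ ℝ such that for every w in the support of the distribution of W_{X,E}, P(W_{X,E} = w) / P(W_{Y,Ê} = -w + k) = e^{β(w - ΔF)}, where ΔF is the free energy difference; in particular the denominator is non-zero for all such w. -/

import Mathlib

open Finset Real

/-!
The reversed chain runs the time reversals of the `M n` with respect to their stationary Gibbs
distributions, in the opposite order, starting from `p N`. Split the energy change along a path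
into work `W` (changes of the energy function at a fixed state) and heat `Q` (jumps at a fixed
energy function), so that `W + Q = E N (x N) - E 0 (x 0)`. Reversing a path negates `Q`, hence
negates `W` up to the constant `E 1 - E 0` (constant because `p 1 = p 0`). The detailed-balance
factors of the time reversals multiply to `exp (β Q)`, which with the endpoint factor
`p N (x N) / p 0 (x 0)` leaves `exp (-β (W - ΔF))` as the ratio of path probabilities; summing
over the paths of given work gives the relation.
-/

lemma Fin.sum_univ_succ_sub_castSucc {G : Type*} [AddCommGroup G] :
    ∀ {n : ℕ} (f : Fin (n + 1) → G), ∑ i : Fin n, (f i.succ - f i.castSucc) = f (Fin.last n) - f 0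
  | 0, f => by simp
  | n + 1, f => by
    rw [Fin.sum_univ_castSucc]
    simp only [Fin.succ_castSucc]
    rw [Fin.sum_univ_succ_sub_castSucc (fun i => f i.castSucc)]
    simp only [Fin.succ_last, Fin.castSucc_zero]
    abel

namespace Crooks

variable {S : Type*}

section Gibbs

variable [Fintype S]

noncomputable def partitionFunction (β : ℝ) (E : S → ℝ) : ℝ := ∑ b, exp (-β * E b)

noncomputable def freeEnergy (β : ℝ) (E : S → ℝ) : ℝ := -(1 / β) * log (partitionFunction β E)

lemma partitionFunction_pos [Nonempty S] (β : ℝ) (E : S → ℝ) : 0 < partitionFunction β E :=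
  sum_pos (fun _ _ => exp_pos _) univ_nonempty

lemma gibbs_pos [Nonempty S] (β : ℝ) (E : S → ℝ) (a : S) :
    0 < exp (-β * E a) / partitionFunction β E :=
  div_pos (exp_pos _) (partitionFunction_pos β E)

lemma sum_gibbs [Nonempty S] (β : ℝ) (E : S → ℝ) :
    ∑ a, exp (-β * E a) / partitionFunction β E = 1 := by
  rw [← sum_div]
  exact div_self (partitionFunction_pos β E).ne'

lemma exp_mul_sub_freeEnergy [Nonempty S] {β : ℝ} (hβ : β ≠ 0) (E E' : S → ℝ) :
    exp (β * (freeEnergy β E' - freeEnergy β E)) =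
      partitionFunction β E / partitionFunction β E' := by
  have h : β * (freeEnergy β E' - freeEnergy β E) =
      log (partitionFunction β E) - log (partitionFunction β E') := by
    unfold freeEnergy; field_simp; ring
  rw [h, exp_sub, exp_log (partitionFunction_pos β E), exp_log (partitionFunction_pos β E')]

lemma sub_eq_of_gibbs_eq [Nonempty S] {β : ℝ} (hβ : β ≠ 0) {E E' : S → ℝ}
    (h : ∀ a, exp (-β * E' a) / partitionFunction β E' = exp (-β * E a) / partitionFunction β E)
    (a : S) :
    E' a - E a = (log (partitionFunction β E) - log (partitionFunction β E')) / β := by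
  have hZ := partitionFunction_pos β E
  have hZ' := partitionFunction_pos β E'
  have hlog := congrArg log (h a)
  rw [log_div (exp_ne_zero _) hZ'.ne', log_div (exp_ne_zero _) hZ.ne', log_exp, log_exp] at hlog
  field_simp
  linarith

end Gibbs

section TimeReversal

variable {ν : S → ℝ} {M : Matrix S S ℝ}

noncomputable def timeReversal (ν : S → ℝ) (M : Matrix S S ℝ) : Matrix S S ℝ :=
  Matrix.of fun a b => ν a / ν b * M b a

lemma timeReversal_nonneg (hν : ∀ a, 0 ≤ ν a) (hM : ∀ a b, 0 ≤ M a b) (a b : S) :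
    0 ≤ timeReversal ν M a b :=
  mul_nonneg (div_nonneg (hν a) (hν b)) (hM b a)

variable [Fintype S]

lemma sum_timeReversal_apply (hν : ∀ a, ν a ≠ 0) (hstat : ∀ a, ∑ b, M a b * ν b = ν a)
    (b : S) : ∑ a, timeReversal ν M a b = 1 := by
  simp only [timeReversal, Matrix.of_apply, div_mul_eq_mul_div, ← sum_div]
  rw [div_eq_one_iff_eq (hν b), ← hstat b]
  exact sum_congr rfl fun a _ => mul_comm _ _

lemma sum_timeReversal_mul (hν : ∀ a, ν a ≠ 0) (hM : ∀ b, ∑ a, M a b = 1) (a : S) :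
    ∑ b, timeReversal ν M a b * ν b = ν a := by
  simp only [timeReversal, Matrix.of_apply]
  calc ∑ b, ν a / ν b * M b a * ν b = ν a * ∑ b, M b a := by
        rw [mul_sum]; exact sum_congr rfl fun b _ => by field_simp [hν b]
    _ = ν a := by rw [hM a, mul_one]

end TimeReversal

section Paths

variable {N : ℕ}

def pathWork (E : ℕ → S → ℝ) (x : Fin (N + 1) → S) : ℝ :=
  ∑ n : Fin N, (E (n + 1) (x n.castSucc) - E n (x n.castSucc))

def pathHeat (E : ℕ → S → ℝ) (x : Fin (N + 1) → S) : ℝ :=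
  ∑ n : Fin N, (E (n + 1) (x n.succ) - E (n + 1) (x n.castSucc))

def pathProb (p₀ : S → ℝ) (M : ℕ → Matrix S S ℝ) (x : Fin (N + 1) → S) : ℝ :=
  p₀ (x 0) * ∏ n : Fin N, M (n + 1) (x n.succ) (x n.castSucc)

lemma pathWork_add_pathHeat (E : ℕ → S → ℝ) (x : Fin (N + 1) → S) :
    pathWork E x + pathHeat E x = E N (x (Fin.last N)) - E 0 (x 0) := by
  rw [pathWork, pathHeat, ← sum_add_distrib]
  convert Fin.sum_univ_succ_sub_castSucc (fun i : Fin (N + 1) => E i (x i)) using 2 with n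
  · simp only [Fin.val_succ, Fin.val_castSucc]
    ring
  · simp
  · simp

/-- Step `n ≥ 1` of the reversed process is step `N + 1 - n` of the original one; at `n = 0`
the truncated subtraction gives `N`, so the reversed process starts from the final data. -/
def revIndex (N n : ℕ) : ℕ := N - (n - 1)

lemma revIndex_le (n : ℕ) : revIndex N n ≤ N := Nat.sub_le _ _

@[simp] lemma revIndex_zero : revIndex N 0 = N := by simp [revIndex]

lemma revIndex_succ (n : Fin N) : revIndex N (n + 1) = (Fin.rev n : ℕ) + 1 := by
  have := n.isLt
  rw [revIndex, Fin.val_rev]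
  omega

lemma pathHeat_comp_rev (E : ℕ → S → ℝ) (x : Fin (N + 1) → S) :
    pathHeat (fun n => E (revIndex N n)) (x ∘ Fin.rev) = -pathHeat E x := by
  rw [pathHeat, pathHeat, ← sum_neg_distrib, ← Equiv.sum_comp Fin.revPerm]
  refine sum_congr rfl fun n _ => ?_
  simp only [Function.comp_apply, Fin.revPerm_apply, Fin.rev_succ, Fin.rev_castSucc,
    revIndex_succ, Fin.rev_rev, neg_sub]

lemma pathWork_comp_rev (E : ℕ → S → ℝ) {k : ℝ} (hk : ∀ a, E (revIndex N N) a - E 0 a = k)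
    (x : Fin (N + 1) → S) :
    pathWork (fun n => E (revIndex N n)) (x ∘ Fin.rev) = -pathWork E x + k := by
  have hrev := pathWork_add_pathHeat (fun n => E (revIndex N n)) (x ∘ Fin.rev)
  rw [pathHeat_comp_rev] at hrev
  have := pathWork_add_pathHeat E x
  have := hk (x 0)
  simp only [Function.comp_apply, Fin.rev_last, Fin.rev_zero, revIndex_zero] at hrev
  linarith

noncomputable def revChain (N : ℕ) (M : ℕ → Matrix S S ℝ) (p : ℕ → S → ℝ) (n : ℕ) :
    Matrix S S ℝ :=
  timeReversal (p (revIndex N n)) (M (revIndex N n))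

lemma pathProb_revChain_comp_rev (M : ℕ → Matrix S S ℝ) (p : ℕ → S → ℝ) (x : Fin (N + 1) → S) :
    pathProb (p N) (revChain N M p) (x ∘ Fin.rev) = p N (x (Fin.last N)) *
      ∏ n : Fin N, (p (n + 1) (x n.castSucc) / p (n + 1) (x n.succ) *
        M (n + 1) (x n.succ) (x n.castSucc)) := by
  rw [pathProb, ← Equiv.prod_comp Fin.revPerm]
  simp only [Function.comp_apply, Fin.revPerm_apply, Fin.rev_succ, Fin.rev_castSucc, Fin.rev_rev,
    revIndex_succ, Fin.rev_zero, revChain, timeReversal, Matrix.of_apply]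

variable [Fintype S]

lemma revChain_stochastic_stationary {M : ℕ → Matrix S S ℝ} {p : ℕ → S → ℝ}
    (hstoch : ∀ n, 1 ≤ n → n ≤ N → (∀ a b, 0 ≤ M n a b) ∧ ∀ b, ∑ a, M n a b = 1)
    (hstat : ∀ n, 1 ≤ n → n ≤ N → ∀ a, ∑ b, M n a b * p n b = p n a)
    (hp : ∀ n ≤ N, ∀ a, 0 < p n a) {n : ℕ} (hn : 1 ≤ n) (hnN : n ≤ N) :
    (∀ a b, 0 ≤ revChain N M p n a b) ∧ (∀ b, ∑ a, revChain N M p n a b = 1) ∧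
      ∀ a, ∑ b, revChain N M p n a b * p (revIndex N n) b = p (revIndex N n) a := by
  have h1 : 1 ≤ revIndex N n := by unfold revIndex; omega
  have hν := fun a => (hp _ (revIndex_le n) a).ne'
  obtain ⟨hM_nonneg, hM_sum⟩ := hstoch _ h1 (revIndex_le n)
  exact ⟨timeReversal_nonneg (fun a => (hp _ (revIndex_le n) a).le) hM_nonneg,
    sum_timeReversal_apply hν (hstat _ h1 (revIndex_le n)), sum_timeReversal_mul hν hM_sum⟩

variable (N) in
noncomputable def workProb (p₀ : S → ℝ) (M : ℕ → Matrix S S ℝ) (E : ℕ → S → ℝ) (w : ℝ) : ℝ :=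
  ∑ x : Fin (N + 1) → S, if pathWork E x = w then pathProb p₀ M x else 0

lemma workProb_eq_mul_of_comp_rev {p₀ p₀' : S → ℝ} {M M' : ℕ → Matrix S S ℝ} {E E' : ℕ → S → ℝ}
    {k : ℝ} {c : ℝ → ℝ}
    (hW : ∀ x : Fin (N + 1) → S, pathWork E' (x ∘ Fin.rev) = -pathWork E x + k)
    (hP : ∀ x : Fin (N + 1) → S,
      pathProb p₀' M' (x ∘ Fin.rev) = c (pathWork E x) * pathProb p₀ M x)
    (w : ℝ) : workProb N p₀' M' E' (-w + k) = c w * workProb N p₀ M E w := by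
  rw [workProb, workProb, mul_sum]
  refine (Fintype.sum_bijective _ Fin.rev_involutive.bijective.comp_right _ _ fun x => ?_).symm
  simp only [hW, hP, add_left_inj, neg_inj]
  split_ifs with h
  · rw [h]
  · rw [mul_zero]

variable [Nonempty S] {β : ℝ} {M : ℕ → Matrix S S ℝ} {p : ℕ → S → ℝ}
  {E : ℕ → S → ℝ}

lemma pathProb_revChain_comp_rev_of_gibbs (hβ : β ≠ 0)
    (hE : ∀ n ≤ N, ∀ a, p n a = exp (-β * E n a) / partitionFunction β (E n))
    (x : Fin (N + 1) → S) :
    pathProb (p N) (revChain N M p) (x ∘ Fin.rev) =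
      exp (-β * (pathWork E x - (freeEnergy β (E N) - freeEnergy β (E 0)))) *
        pathProb (p 0) M x := by
  have hratio : ∏ n : Fin N, p (n + 1) (x n.castSucc) / p (n + 1) (x n.succ) =
      exp (β * pathHeat E x) := by
    rw [pathHeat, mul_sum, exp_sum]
    refine prod_congr rfl fun n _ => ?_
    rw [hE _ n.isLt (x _), hE _ n.isLt (x _), div_div_div_cancel_right₀
      (partitionFunction_pos β _).ne', ← exp_sub]
    congr 1
    ring
  have hexp : -β * (pathWork E x - (freeEnergy β (E N) - freeEnergy β (E 0))) =
      β * pathHeat E x + -β * E N (x (Fin.last N)) - -β * E 0 (x 0) +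
        β * (freeEnergy β (E N) - freeEnergy β (E 0)) := by
    linear_combination (-β) * pathWork_add_pathHeat E x
  rw [pathProb_revChain_comp_rev, prod_mul_distrib, hratio, pathProb, hexp, exp_add, exp_sub,
    exp_add, exp_mul_sub_freeEnergy hβ, hE N le_rfl, hE 0 (Nat.zero_le N)]
  have := (partitionFunction_pos β (E 0)).ne'
  field_simp

lemma workProb_revChain {k : ℝ} (hβ : β ≠ 0)
    (hE : ∀ n ≤ N, ∀ a, p n a = exp (-β * E n a) / partitionFunction β (E n))
    (hk : ∀ a, E (revIndex N N) a - E 0 a = k) (w : ℝ) :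
    workProb N (p N) (revChain N M p) (fun n => E (revIndex N n)) (-w + k) =
      exp (-β * (w - (freeEnergy β (E N) - freeEnergy β (E 0)))) * workProb N (p 0) M E w :=
  workProb_eq_mul_of_comp_rev (c := fun W => exp (-β * (W - (freeEnergy β (E N) -
    freeEnergy β (E 0))))) (pathWork_comp_rev E hk) (pathProb_revChain_comp_rev_of_gibbs hβ hE) w

lemma exists_energy_revIndex_self_sub (hβ : β ≠ 0)
    (hE : ∀ n ≤ N, ∀ a, p n a = exp (-β * E n a) / partitionFunction β (E n))
    (hp01 : ∀ a, p 1 a = p 0 a) : ∃ k, ∀ a, E (revIndex N N) a - E 0 a = k := by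
  have hp_rev : p (revIndex N N) = p 0 := by
    rcases N with _ | N
    · rfl
    · funext a
      simpa [revIndex] using hp01 a
  refine ⟨_, sub_eq_of_gibbs_eq hβ fun a => ?_⟩
  rw [← hE _ (revIndex_le N) a, ← hE 0 N.zero_le a, hp_rev]

end Paths

end Crooks

open Crooks

theorem stmt_16_general {S : Type*} [Fintype S] [Nonempty S] (N : ℕ)
    (β : ℝ) (hβ : 0 < β)
    (M : ℕ → Matrix S S ℝ) (p : ℕ → S → ℝ) (E : ℕ → S → ℝ)
    (hstoch : ∀ n, 1 ≤ n → n ≤ N → (∀ a b, 0 ≤ M n a b) ∧ ∀ b, ∑ a, M n a b = 1)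
    (hstat : ∀ n, 1 ≤ n → n ≤ N → ∀ a, ∑ b, M n a b * p n b = p n a)
    (hE : ∀ n ≤ N, ∀ a, p n a = Real.exp (-β * E n a) / ∑ b, Real.exp (-β * E n b))
    -- p_0 is the stationary distribution of M_1
    (hp01 : ∀ a, p 1 a = p 0 a) :
    ∃ (Mhat : ℕ → Matrix S S ℝ) (q : ℕ → S → ℝ) (Ehat : ℕ → S → ℝ) (k : ℝ),
      -- Y is a Markov chain: initial distribution q 0 and stochastic matrices Mhat
      (∀ a, 0 < q 0 a) ∧ (∑ a, q 0 a = 1) ∧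
      (∀ n, 1 ≤ n → n ≤ N →
        (∀ a b, 0 ≤ Mhat n a b) ∧ (∀ b, ∑ a, Mhat n a b = 1) ∧
        (∀ a, ∑ b, Mhat n a b * q n b = q n a) ∧ (∀ a, 0 < q n a)) ∧
      -- Ê is a family of energies of Y
      (∀ n ≤ N, ∀ a, q n a = Real.exp (-β * Ehat n a) / ∑ b, Real.exp (-β * Ehat n b)) ∧
      -- the fluctuation relation on the support of the work distribution of X
      (∀ w : ℝ,
        (∑ x : Fin (N + 1) → S,
          if (∑ n : Fin N, (E ((n : ℕ) + 1) (x n.castSucc) - E (n : ℕ) (x n.castSucc))) = w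
          then p 0 (x 0) * ∏ n : Fin N, M ((n : ℕ) + 1) (x n.succ) (x n.castSucc)
          else 0) ≠ 0 →
        (∑ y : Fin (N + 1) → S,
          if (∑ n : Fin N, (Ehat ((n : ℕ) + 1) (y n.castSucc) - Ehat (n : ℕ) (y n.castSucc)))
              = -w + k
          then q 0 (y 0) * ∏ n : Fin N, Mhat ((n : ℕ) + 1) (y n.succ) (y n.castSucc)
          else 0) ≠ 0 ∧
        (∑ x : Fin (N + 1) → S,
          if (∑ n : Fin N, (E ((n : ℕ) + 1) (x n.castSucc) - E (n : ℕ) (x n.castSucc))) = w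
          then p 0 (x 0) * ∏ n : Fin N, M ((n : ℕ) + 1) (x n.succ) (x n.castSucc)
          else 0)
        / (∑ y : Fin (N + 1) → S,
          if (∑ n : Fin N, (Ehat ((n : ℕ) + 1) (y n.castSucc) - Ehat (n : ℕ) (y n.castSucc)))
              = -w + k
          then q 0 (y 0) * ∏ n : Fin N, Mhat ((n : ℕ) + 1) (y n.succ) (y n.castSucc)
          else 0)
        = Real.exp (β * (w - ((-(1 / β) * Real.log (∑ b, Real.exp (-β * E N b)))
            - (-(1 / β) * Real.log (∑ b, Real.exp (-β * E 0 b))))))) := by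
  replace hE : ∀ n ≤ N, ∀ a, p n a = exp (-β * E n a) / partitionFunction β (E n) := hE
  have hp : ∀ n ≤ N, ∀ a, 0 < p n a := fun n hn a => hE n hn a ▸ gibbs_pos β (E n) a
  obtain ⟨k, hk⟩ := exists_energy_revIndex_self_sub hβ.ne' hE hp01
  refine ⟨revChain N M p, fun n => p (revIndex N n), fun n => E (revIndex N n), k,
    hp N le_rfl, ?_, fun n hn hnN => ?_, fun n _ => hE _ (revIndex_le n), fun w hw => ?_⟩
  · rw [← sum_gibbs β (E N)]
    exact sum_congr rfl fun a _ => hE N le_rfl a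
  · obtain ⟨h_nonneg, h_sum, h_stat⟩ := revChain_stochastic_stationary hstoch hstat hp hn hnN
    exact ⟨h_nonneg, h_sum, h_stat, hp _ (revIndex_le n)⟩
  · change workProb N (p 0) M E w ≠ 0 at hw
    change workProb N (p N) (revChain N M p) (fun n => E (revIndex N n)) (-w + k) ≠ 0 ∧
      workProb N (p 0) M E w /
          workProb N (p N) (revChain N M p) (fun n => E (revIndex N n)) (-w + k)
        = exp (β * (w - (freeEnergy β (E N) - freeEnergy β (E 0))))
    rw [workProb_revChain hβ.ne' hE hk]
    refine ⟨mul_ne_zero (exp_ne_zero _) hw, ?_⟩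
    rw [div_mul_cancel_right₀ hw, ← exp_neg, neg_mul, neg_neg]

/-- Generalized Crooks fluctuation theorem: if moreover p_0 equals the
stationary distribution p_1 of M_1, then there exist a Markov chain Y (with a family
of energies Ê) and a constant k such that for every w in the support of the work
distribution of X, P(W_{X,E} = w) / P(W_{Y,Ê} = -w + k) = e^{β(w - ΔF)}, the
denominator being non-zero for all such w. -/
theorem stmt_16 {S : Type*} [Fintype S] [DecidableEq S] [Nonempty S] (N : ℕ)
    (β : ℝ) (hβ : 0 < β)
    (M : ℕ → Matrix S S ℝ) (p : ℕ → S → ℝ) (E : ℕ → S → ℝ)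
    (hp0 : ∀ x, 0 < p 0 x) (hp0sum : ∑ x, p 0 x = 1)
    (hstoch : ∀ n, 1 ≤ n → n ≤ N → (∀ a b, 0 ≤ M n a b) ∧ ∀ b, ∑ a, M n a b = 1)
    (hirr : ∀ n, 1 ≤ n → n ≤ N → ∀ a b, ∃ m : ℕ, 1 ≤ m ∧ 0 < ((M n) ^ m) a b)
    (hstat : ∀ n, 1 ≤ n → n ≤ N → ∀ a, ∑ b, M n a b * p n b = p n a)
    (hpos : ∀ n, 1 ≤ n → n ≤ N → ∀ a, 0 < p n a)
    (hE : ∀ n ≤ N, ∀ a, p n a = Real.exp (-β * E n a) / ∑ b, Real.exp (-β * E n b))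
    -- p_0 is the stationary distribution of M_1
    (hp01 : ∀ a, p 1 a = p 0 a) :
    ∃ (Mhat : ℕ → Matrix S S ℝ) (q : ℕ → S → ℝ) (Ehat : ℕ → S → ℝ) (k : ℝ),
      -- Y is a Markov chain: initial distribution q 0 and stochastic matrices Mhat
      (∀ a, 0 < q 0 a) ∧ (∑ a, q 0 a = 1) ∧
      (∀ n, 1 ≤ n → n ≤ N →
        (∀ a b, 0 ≤ Mhat n a b) ∧ (∀ b, ∑ a, Mhat n a b = 1) ∧
        (∀ a, ∑ b, Mhat n a b * q n b = q n a) ∧ (∀ a, 0 < q n a)) ∧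
      -- Ê is a family of energies of Y
      (∀ n ≤ N, ∀ a, q n a = Real.exp (-β * Ehat n a) / ∑ b, Real.exp (-β * Ehat n b)) ∧
      -- the fluctuation relation on the support of the work distribution of X
      (∀ w : ℝ,
        (∑ x : Fin (N + 1) → S,
          if (∑ n : Fin N, (E ((n : ℕ) + 1) (x n.castSucc) - E (n : ℕ) (x n.castSucc))) = w
          then p 0 (x 0) * ∏ n : Fin N, M ((n : ℕ) + 1) (x n.succ) (x n.castSucc)
          else 0) ≠ 0 →
        (∑ y : Fin (N + 1) → S,
          if (∑ n : Fin N, (Ehat ((n : ℕ) + 1) (y n.castSucc) - Ehat (n : ℕ) (y n.castSucc)))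
              = -w + k
          then q 0 (y 0) * ∏ n : Fin N, Mhat ((n : ℕ) + 1) (y n.succ) (y n.castSucc)
          else 0) ≠ 0 ∧
        (∑ x : Fin (N + 1) → S,
          if (∑ n : Fin N, (E ((n : ℕ) + 1) (x n.castSucc) - E (n : ℕ) (x n.castSucc))) = w
          then p 0 (x 0) * ∏ n : Fin N, M ((n : ℕ) + 1) (x n.succ) (x n.castSucc)
          else 0)
        / (∑ y : Fin (N + 1) → S,
          if (∑ n : Fin N, (Ehat ((n : ℕ) + 1) (y n.castSucc) - Ehat (n : ℕ) (y n.castSucc)))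
              = -w + k
          then q 0 (y 0) * ∏ n : Fin N, Mhat ((n : ℕ) + 1) (y n.succ) (y n.castSucc)
          else 0)
        = Real.exp (β * (w - ((-(1 / β) * Real.log (∑ b, Real.exp (-β * E N b)))
            - (-(1 / β) * Real.log (∑ b, Real.exp (-β * E 0 b))))))) :=
  stmt_16_general N β hβ M p E hstoch hstat hE hp01
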